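/- arXiv:2107.04293 — 9 statements merged into one kernel-verified Lean document; each statement's English description precedes it below -/
import Mathlib

section
/- Let X be a topological space and A ⊆ X. Then the set of points of A at which A fails to be locally closed equals A ∩ ∂(∂A), where ∂S denotes the closure of S minus S (the frontier relative to closure). -/
/-- For `A ⊆ X`, the set of points of `A` where `A` fails to be locally closed equals
`A ∩ ∂(∂ A)`, where `∂ S = closure S \ S`. -/
theorem stmt0 {X : Type*} [TopologicalSpace X] (A : Set X) :
    {a : X | a ∈ A ∧ ¬ ∃ U : Set X, IsOpen U ∧ a ∈ U ∧ A ∩ U = closure A ∩ U} =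
      A ∩ (closure (closure A \ A) \ (closure A \ A)) := by
  ext a
  simp only [Set.mem_setOf_eq, Set.mem_inter_iff, Set.mem_diff]
  constructor
  · rintro ⟨ha, h⟩
    refine ⟨ha, ?_, fun hd => hd.2 ha⟩
    by_contra hc
    apply h
    refine ⟨(closure (closure A \ A))ᶜ, isClosed_closure.isOpen_compl, hc, ?_⟩
    ext x
    constructor
    · rintro ⟨hx, hxU⟩
      exact ⟨subset_closure hx, hxU⟩
    · rintro ⟨hx, hxU⟩
      refine ⟨?_, hxU⟩
      by_contra hxA
      exact hxU (subset_closure ⟨hx, hxA⟩)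
  · rintro ⟨ha, hcl, -⟩
    refine ⟨ha, ?_⟩
    rintro ⟨U, hU, haU, hAU⟩
    obtain ⟨x, hxU, hxc, hxA⟩ := mem_closure_iff.mp hcl U hU haU
    have : x ∈ A ∩ U := hAU.symm ▸ Set.mem_inter hxc hxU
    exact hxA this.1
end

section
/- Let X be a topological space and Y ⊆ X a constructible subset (a finite Boolean combination of open sets). Then Y is nowhere dense if and only if Y has empty interior. -/
lemma aux_locallyClosed_nd {X : Type*} [TopologicalSpace X] {U V : Set X}
    (hU : IsOpen U) (hV : IsOpen V) (h : interior (U \ V) = ∅) :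
    IsNowhereDense (U \ V) := by
  set A := U \ V with hA
  have hclV : closure A ⊆ Vᶜ :=
    closure_minimal (fun x hx => hx.2) hV.isClosed_compl
  have hkey : interior (closure A) ∩ U ⊆ interior A := by
    apply interior_maximal
    · intro x hx
      exact ⟨hx.2, hclV (interior_subset hx.1)⟩
    · exact isOpen_interior.inter hU
  rw [IsNowhereDense]
  ext x
  simp only [Set.mem_empty_iff_false, iff_false]
  intro hx
  have hxU : x ∈ closure U := closure_mono (fun y hy => hy.1) (interior_subset hx)
  rcases mem_closure_iff.mp hxU _ isOpen_interior hx with ⟨y, hy1, hy2⟩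
  have : y ∈ interior A := hkey ⟨hy1, hy2⟩
  rw [h] at this
  exact this

lemma aux_union_nd {X : Type*} [TopologicalSpace X] {s t : Set X}
    (hs : IsNowhereDense s) (ht : IsNowhereDense t) : IsNowhereDense (s ∪ t) := by
  rw [IsNowhereDense, closure_union]
  rw [IsNowhereDense] at hs ht
  have h1 : interior (closure s ∪ closure t) ⊆ closure t := by
    intro x hx
    by_contra hxt
    have hop : IsOpen (interior (closure s ∪ closure t) \ closure t) :=
      isOpen_interior.sdiff isClosed_closure
    have hsub : interior (closure s ∪ closure t) \ closure t ⊆ interior (closure s) := by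
      apply interior_maximal _ hop
      intro y hy
      rcases interior_subset hy.1 with h | h
      · exact h
      · exact absurd h hy.2
    have : x ∈ interior (closure s) := hsub ⟨hx, hxt⟩
    rw [hs] at this; exact this
  have : interior (closure s ∪ closure t) ⊆ interior (closure t) :=
    interior_maximal h1 isOpen_interior
  rw [ht] at this
  exact Set.eq_empty_of_subset_empty this

/-- A constructible subset (finite Boolean combination of open sets, equivalently a finite
union of locally closed sets) of a topological space is nowhere dense iff it has empty
interior. -/
theorem stmt1 {X : Type*} [TopologicalSpace X] (Y : Set X)
    (hY : ∃ s : Finset (Set X × Set X), (∀ p ∈ s, IsOpen p.1 ∧ IsOpen p.2) ∧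
      Y = ⋃ p ∈ s, p.1 \ p.2) :
    IsNowhereDense Y ↔ interior Y = ∅ := by
  constructor
  · intro h
    have : interior Y ⊆ interior (closure Y) := interior_mono subset_closure
    rw [h] at this
    exact Set.eq_empty_of_subset_empty this
  · intro hint
    classical
    obtain ⟨s, hopen, rfl⟩ := hY
    induction s using Finset.induction_on with
    | empty => simp only [Finset.notMem_empty, Set.iUnion_of_empty, Set.iUnion_empty]; exact isNowhereDense_empty
    | @insert p s hp ih =>
      rw [Finset.set_biUnion_insert] at hint ⊢
      have h1 : interior (p.1 \ p.2) = ∅ :=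
        Set.eq_empty_of_subset_empty
          (le_trans (interior_mono Set.subset_union_left) hint.le)
      have h2 : interior (⋃ q ∈ s, q.1 \ q.2) = ∅ :=
        Set.eq_empty_of_subset_empty
          (le_trans (interior_mono Set.subset_union_right) hint.le)
      exact aux_union_nd
        (aux_locallyClosed_nd (hopen p (Finset.mem_insert_self p s)).1
          (hopen p (Finset.mem_insert_self p s)).2 h1)
        (ih (fun q hq => hopen q (Finset.mem_insert_of_mem hq)) h2)
end

section
/- Let X and Y be subsets of a Hausdorff topological space T. Then the Cantor–Bendixson rank of X ∪ Y is at most the natural (Hessenberg) sum of the Cantor–Bendixson ranks of X and Y. In particular, if X is a union of n discrete subsets then its Cantor–Bendixson rank is at most n, and conversely. -/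
/-!
Argue by induction on `α ♯ β`. A point `x ∈ X` has a Cantor–Bendixson rank `a < α`: it lies in
`X^(a)` and is isolated there, so some punctured open neighbourhood `V` of `x` satisfies
`(X ∩ V)^(a) = ∅`. By induction `((X ∪ Y) ∩ V)^(a ♯ β) = ∅`, and since derivatives are local,
`x` is not a limit of points of `(X ∪ Y)^(a ♯ β)`, i.e. `x ∉ (X ∪ Y)^(a ♯ β + 1)`; as
`a ♯ β < α ♯ β`, `x ∉ (X ∪ Y)^(α ♯ β)`. Points of `Y` are handled symmetrically.

For finite ranks, `n ♯ 1 = n + 1` turns the union bound into "a union of `n` discrete sets has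
rank `≤ n`", and conversely a set of rank `≤ n` is covered by its `n` discrete layers
`Z^(i) \ Z^(i+1)`.
-/

/-- The natural (Hessenberg) sum of ordinals, as `Ordinal.nadd` was defined in the older
Mathlib (removed since). -/
noncomputable def Ordinal.nadd : Ordinal.{u} → Ordinal.{u} → Ordinal.{u}
  | a, b =>
    max (⨆ x : Set.Iio a, Order.succ (Ordinal.nadd x.1 b))
      (⨆ x : Set.Iio b, Order.succ (Ordinal.nadd a x.1))
termination_by a b => (a, b)
decreasing_by
  · exact Prod.Lex.left _ _ x.2
  · exact Prod.Lex.right _ x.2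

namespace NaturalOps

infixl:65 " ♯ " => Ordinal.nadd

end NaturalOps

open Ordinal NaturalOps

/-- The Cantor–Bendixson derivative: the set of non-isolated points of `s`
(in the subspace topology). -/
def cbDeriv {X : Type u} [TopologicalSpace X] (s : Set X) : Set X :=
  {x | x ∈ s ∧ x ∈ closure (s \ {x})}

/-- Iterated Cantor–Bendixson derivatives of `A`, indexed by ordinals. -/
noncomputable def cbIter {X : Type u} [TopologicalSpace X] (A : Set X) (o : Ordinal.{u}) :
    Set X :=
  Ordinal.limitRecOn o A (fun _ ih => cbDeriv ih)
    (fun o _ ih => ⋂ p : {b : Ordinal.{u} // b < o}, ih p.1 p.2)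

/-- A set `D` is discrete (in the subspace topology) iff each of its points is isolated
in it. -/
def IsDiscreteSubset {X : Type u} [TopologicalSpace X] (D : Set X) : Prop :=
  ∀ x ∈ D, x ∉ closure (D \ {x})

namespace Ordinal

theorem nadd_def (a b : Ordinal.{u}) :
    a ♯ b = max (⨆ x : Set.Iio a, Order.succ (x.1 ♯ b)) (⨆ y : Set.Iio b, Order.succ (a ♯ y.1)) := by
  rw [Ordinal.nadd]

theorem nadd_lt_nadd_right {a b : Ordinal.{u}} (h : a < b) (c : Ordinal.{u}) : a ♯ c < b ♯ c := by
  rw [nadd_def b c]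
  exact (Order.lt_succ (a ♯ c)).trans_le <| le_max_of_le_left <|
    le_ciSup (f := fun x : Set.Iio b => Order.succ (x.1 ♯ c)) bddAbove_of_small ⟨a, h⟩

theorem nadd_comm (a b : Ordinal.{u}) : a ♯ b = b ♯ a := by
  induction a using WellFoundedLT.induction generalizing b with | _ a iha =>
  induction b using WellFoundedLT.induction with | _ b ihb =>
  rw [nadd_def a b, nadd_def b a, max_comm]
  congr 1
  · exact iSup_congr fun y => by rw [ihb y.1 y.2]
  · exact iSup_congr fun x => by rw [iha x.1 x.2 b]

theorem nadd_zero (a : Ordinal.{u}) : a ♯ 0 = a := by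
  induction a using WellFoundedLT.induction with | _ a ih =>
  have : IsEmpty (Set.Iio (0 : Ordinal.{u})) := by simp
  rw [nadd_def, ciSup_of_empty (ι := Set.Iio (0 : Ordinal.{u})), max_bot_right]
  calc ⨆ x : Set.Iio a, Order.succ (x.1 ♯ 0) = ⨆ x : Set.Iio a, Order.succ x.1 :=
        iSup_congr fun x => by rw [ih x.1 x.2]
    _ = a := iSup_succ a

theorem nadd_one (a : Ordinal.{u}) : a ♯ 1 = a + 1 := by
  induction a using WellFoundedLT.induction with | _ a ih =>
  rw [nadd_def]
  apply le_antisymm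
  · refine max_le (ciSup_le' fun x => ?_) (ciSup_le' fun y => ?_)
    · rw [ih x.1 x.2, Order.succ_eq_add_one]
      gcongr
      exact Order.add_one_le_of_lt x.2
    · rw [Order.lt_one_iff.mp (Set.mem_Iio.mp y.2), nadd_zero, Order.succ_eq_add_one]
  · have h := le_ciSup (f := fun y : Set.Iio (1 : Ordinal.{u}) => Order.succ (a ♯ y.1))
      bddAbove_of_small ⟨0, Set.mem_Iio.mpr zero_lt_one⟩
    rw [nadd_zero, Order.succ_eq_add_one] at h
    exact le_max_of_le_right h

end Ordinal

section CantorBendixson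

variable {X : Type u} [TopologicalSpace X]

lemma cbDeriv_subset (s : Set X) : cbDeriv s ⊆ s := fun _ h => h.1

lemma cbDeriv_mono {s t : Set X} (h : s ⊆ t) : cbDeriv s ⊆ cbDeriv t :=
  fun _ hx => ⟨h hx.1, closure_mono (Set.sdiff_subset_sdiff_left h) hx.2⟩

lemma isDiscreteSubset_iff_cbDeriv_eq_empty {D : Set X} :
    IsDiscreteSubset D ↔ cbDeriv D = ∅ := by
  simp [IsDiscreteSubset, cbDeriv, Set.eq_empty_iff_forall_notMem]

lemma cbIter_zero (A : Set X) : cbIter A 0 = A := limitRecOn_zero ..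

lemma cbIter_add_one (A : Set X) (o : Ordinal.{u}) : cbIter A (o + 1) = cbDeriv (cbIter A o) :=
  limitRecOn_add_one ..

lemma cbIter_one (A : Set X) : cbIter A 1 = cbDeriv A := by
  simpa only [zero_add, cbIter_zero] using cbIter_add_one A 0

lemma cbIter_limit (A : Set X) {o : Ordinal.{u}} (ho : Order.IsSuccLimit o) :
    cbIter A o = ⋂ p : {b : Ordinal.{u} // b < o}, cbIter A p.1 :=
  limitRecOn_limit _ _ _ _ ho

lemma cbIter_mono {A B : Set X} (h : A ⊆ B) (o : Ordinal.{u}) : cbIter A o ⊆ cbIter B o := by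
  induction o using Ordinal.limitRecOn with
  | zero => simpa only [cbIter_zero] using h
  | add_one o ih => simpa only [cbIter_add_one] using cbDeriv_mono ih
  | limit o ho ih =>
    rw [cbIter_limit A ho, cbIter_limit B ho]
    exact Set.iInter_mono fun p => ih p.1 p.2

lemma cbIter_antitone (A : Set X) : Antitone (cbIter A) := by
  intro o₁ o₂ h
  induction o₂ using Ordinal.limitRecOn with
  | zero => rw [nonpos_iff_eq_zero.mp h]
  | add_one o ih =>
    rcases h.eq_or_lt with rfl | h
    · rfl
    · rw [cbIter_add_one]
      exact (cbDeriv_subset _).trans (ih (Order.lt_add_one_iff.mp h))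
  | limit o ho ih =>
    rcases h.eq_or_lt with rfl | h
    · rfl
    · rw [cbIter_limit A ho]
      exact Set.iInter_subset _ (⟨o₁, h⟩ : {b // b < o})

lemma cbIter_subset (A : Set X) (o : Ordinal.{u}) : cbIter A o ⊆ A :=
  (cbIter_antitone A (zero_le : 0 ≤ o)).trans (cbIter_zero A).subset

lemma cbIter_inter_subset_of_isOpen (A : Set X) {U : Set X} (hU : IsOpen U) (o : Ordinal.{u}) :
    cbIter A o ∩ U ⊆ cbIter (A ∩ U) o := by
  induction o using Ordinal.limitRecOn with
  | zero => simp only [cbIter_zero, subset_refl]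
  | add_one o ih =>
    rw [cbIter_add_one, cbIter_add_one]
    rintro x ⟨⟨hxA, hxcl⟩, hxU⟩
    refine ⟨ih ⟨hxA, hxU⟩, mem_closure_iff.mpr fun V hV hxV => ?_⟩
    obtain ⟨y, ⟨hyV, hyU⟩, hyA, hyx⟩ := mem_closure_iff.mp hxcl (V ∩ U) (hV.inter hU) ⟨hxV, hxU⟩
    exact ⟨y, hyV, ih ⟨hyA, hyU⟩, hyx⟩
  | limit o ho ih =>
    rw [cbIter_limit A ho, cbIter_limit (A ∩ U) ho]
    rintro x ⟨hx, hxU⟩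
    exact Set.mem_iInter.mpr fun p => ih p.1 p.2 ⟨Set.mem_iInter.mp hx p, hxU⟩

lemma exists_mem_cbIter_notMem_cbIter_add_one {A : Set X} {α : Ordinal.{u}}
    (h : cbIter A α = ∅) {x : X} (hx : x ∈ A) :
    ∃ a < α, x ∈ cbIter A a ∧ x ∉ cbIter A (a + 1) := by
  by_contra! H
  have hmem : ∀ o ≤ α, x ∈ cbIter A o := by
    intro o
    induction o using Ordinal.limitRecOn with
    | zero => exact fun _ => (cbIter_zero A).symm ▸ hx
    | add_one o ih =>
      intro ho
      have ho' : o < α := Order.add_one_le_iff.mp ho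
      exact H o ho' (ih ho'.le)
    | limit o ho ih =>
      intro hoα
      rw [cbIter_limit A ho, Set.mem_iInter]
      exact fun p => ih p.1 p.2 (p.2.le.trans hoα)
  simpa [h] using hmem α le_rfl

lemma isDiscreteSubset_cbIter_diff_cbIter_add_one (A : Set X) (o : Ordinal.{u}) :
    IsDiscreteSubset (cbIter A o \ cbIter A (o + 1)) := by
  rw [isDiscreteSubset_iff_cbDeriv_eq_empty, Set.eq_empty_iff_forall_notMem]
  intro x hx
  have hx' := cbDeriv_mono Set.sdiff_subset hx
  rw [← cbIter_add_one] at hx'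
  exact (cbDeriv_subset _ hx).2 hx'

lemma exists_isOpen_cbIter_inter_diff_singleton_eq_empty {A : Set X} {a : Ordinal.{u}} {x : X}
    (hx : x ∈ cbIter A a) (hx' : x ∉ cbIter A (a + 1)) :
    ∃ U, IsOpen U ∧ x ∈ U ∧ cbIter (A ∩ (U \ {x})) a = ∅ := by
  refine ⟨(closure (cbIter A a \ {x}))ᶜ, isClosed_closure.isOpen_compl,
    fun hcl => hx' ((cbIter_add_one A a).symm ▸ ⟨hx, hcl⟩), ?_⟩
  refine Set.eq_empty_of_subset_empty fun y hy => ?_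
  have hyU : y ∈ (closure (cbIter A a \ {x}))ᶜ \ {x} := (cbIter_subset _ a hy).2
  exact hyU.1 (subset_closure ⟨cbIter_mono Set.inter_subset_left a hy, hyU.2⟩)

lemma exists_isDiscreteSubset_iUnion_eq_of_cbIter_eq_empty {Z : Set X} {n : ℕ}
    (h : cbIter Z (n : Ordinal.{u}) = ∅) :
    ∃ f : Fin n → Set X, (∀ i, IsDiscreteSubset (f i)) ∧ Z = ⋃ i, f i := by
  refine ⟨fun i => cbIter Z (i : ℕ) \ cbIter Z ((i : ℕ) + 1),
    fun i => isDiscreteSubset_cbIter_diff_cbIter_add_one Z _, ?_⟩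
  refine Set.Subset.antisymm (fun x hx => ?_) (Set.iUnion_subset fun i => ?_)
  · obtain ⟨a, ha, hxa, hxa'⟩ := exists_mem_cbIter_notMem_cbIter_add_one h hx
    obtain ⟨k, rfl⟩ := Ordinal.lt_omega0.mp (ha.trans (Ordinal.natCast_lt_omega0 n))
    exact Set.mem_iUnion.mpr ⟨⟨k, by exact_mod_cast ha⟩, hxa, hxa'⟩
  · exact Set.sdiff_subset.trans (cbIter_subset Z _)

end CantorBendixson

section UnionBound

variable {T : Type u} [TopologicalSpace T] [T1Space T]

lemma notMem_cbIter_add_one_of_cbIter_inter_diff_singleton_eq_empty {A U : Set T}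
    {o : Ordinal.{u}} {x : T} (hU : IsOpen U) (hxU : x ∈ U)
    (h : cbIter (A ∩ (U \ {x})) o = ∅) : x ∉ cbIter A (o + 1) := by
  rw [cbIter_add_one]
  intro hx
  obtain ⟨y, hyU, hyA, hyx⟩ := mem_closure_iff.mp hx.2 U hU hxU
  have hy := cbIter_inter_subset_of_isOpen A (hU.sdiff isClosed_singleton) o ⟨hyA, hyU, hyx⟩
  rwa [h] at hy

lemma notMem_cbIter_union_nadd_of_mem_left {X Y : Set T} {α β : Ordinal.{u}}
    (hX : cbIter X α = ∅) (hY : cbIter Y β = ∅)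
    (ih : ∀ a < α, ∀ X' Y' : Set T, cbIter X' a = ∅ → cbIter Y' β = ∅ →
      cbIter (X' ∪ Y') (a ♯ β) = ∅)
    {x : T} (hxX : x ∈ X) : x ∉ cbIter (X ∪ Y) (α ♯ β) := by
  obtain ⟨a, haα, hxa, hxa'⟩ := exists_mem_cbIter_notMem_cbIter_add_one hX hxX
  obtain ⟨U, hU, hxU, hXU⟩ := exists_isOpen_cbIter_inter_diff_singleton_eq_empty hxa hxa'
  have hYU : cbIter (Y ∩ (U \ {x})) β = ∅ :=
    Set.subset_eq_empty (cbIter_mono Set.inter_subset_left β) hY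
  have hUnion : cbIter ((X ∪ Y) ∩ (U \ {x})) (a ♯ β) = ∅ := by
    rw [Set.union_inter_distrib_right]
    exact ih a haα _ _ hXU hYU
  exact fun hx => notMem_cbIter_add_one_of_cbIter_inter_diff_singleton_eq_empty hU hxU hUnion <|
    cbIter_antitone _ (Order.add_one_le_iff.mpr (Ordinal.nadd_lt_nadd_right haα β)) hx

theorem cbIter_union_nadd_eq_empty {X Y : Set T} {α β : Ordinal.{u}}
    (hX : cbIter X α = ∅) (hY : cbIter Y β = ∅) : cbIter (X ∪ Y) (α ♯ β) = ∅ := by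
  induction α using WellFoundedLT.induction generalizing β X Y with | _ α ihα =>
  induction β using WellFoundedLT.induction generalizing X Y with | _ β ihβ =>
  refine Set.eq_empty_of_forall_notMem fun x hx => ?_
  rcases cbIter_subset _ _ hx with hxX | hxY
  · exact notMem_cbIter_union_nadd_of_mem_left hX hY (fun a ha _ _ => ihα a ha) hxX hx
  · refine notMem_cbIter_union_nadd_of_mem_left hY hX (fun b hb Y' X' hY' hX' => ?_) hxY ?_
    · rw [Set.union_comm, Ordinal.nadd_comm]
      exact ihβ b hb hX' hY'
    · rwa [Set.union_comm, Ordinal.nadd_comm]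

lemma cbIter_iUnion_eq_empty_of_isDiscreteSubset {n : ℕ} {f : Fin n → Set T}
    (hf : ∀ i, IsDiscreteSubset (f i)) : cbIter (⋃ i, f i) (n : Ordinal.{u}) = ∅ := by
  induction n with
  | zero => simp [cbIter_zero]
  | succ n ih =>
    have hsplit : (⋃ i, f i) = (⋃ i : Fin n, f i.succ) ∪ f 0 := by
      ext x
      simp [Fin.exists_fin_succ, or_comm]
    have h0 : cbIter (f 0) (1 : Ordinal.{u}) = ∅ := by
      rw [cbIter_one]
      exact isDiscreteSubset_iff_cbDeriv_eq_empty.mp (hf 0)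
    rw [hsplit, Nat.cast_succ, ← Ordinal.nadd_one]
    exact cbIter_union_nadd_eq_empty (ih fun i => hf i.succ) h0

end UnionBound

/-- Let `X`, `Y` be subsets of a Hausdorff space `T`.  The Cantor–Bendixson rank of
`X ∪ Y` is at most the Hessenberg (natural) sum of the ranks of `X` and `Y`
(rank `≤ γ` being expressed as: the `γ`-th derivative is empty).  In particular,
a set is a union of `n` discrete sets iff its Cantor–Bendixson rank is at most `n`. -/
theorem stmt2 {T : Type u} [TopologicalSpace T] [T2Space T] (X Y : Set T)
    (α β : Ordinal.{u}) (hX : cbIter X α = ∅) (hY : cbIter Y β = ∅) :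
    cbIter (X ∪ Y) (α ♯ β) = ∅ ∧
    ∀ (Z : Set T) (n : ℕ),
      ((∃ f : Fin n → Set T, (∀ i, IsDiscreteSubset (f i)) ∧ Z = ⋃ i, f i) ↔
        cbIter Z (n : Ordinal.{u}) = ∅) :=
  ⟨cbIter_union_nadd_eq_empty hX hY, fun _ _ =>
    ⟨fun ⟨_, hf, hZ⟩ => hZ ▸ cbIter_iUnion_eq_empty_of_isDiscreteSubset hf,
      exists_isDiscreteSubset_iUnion_eq_of_cbIter_eq_empty⟩⟩
end

section
/- Let X be a Baire topological space and f : X → ℝᵐ a pointwise limit of a family (f_t)_{t∈ℝ} of continuous functions, in the sense that f(x) = lim_{t→+∞} f_t(x) for every x. Then the set of discontinuity points of f is meager in X. -/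
open Filter Set Topology

/-- If `X` is a Baire space and `f : X → ℝᵐ` is a pointwise limit (as `t → +∞`) of a
family `(F t)` of continuous functions, then the set of discontinuity points of `f` is
meager in `X`. -/
theorem stmt4 {X : Type*} [TopologicalSpace X] [BaireSpace X] (m : ℕ)
    (f : X → (Fin m → ℝ)) (F : ℝ → X → (Fin m → ℝ))
    (hcont : ∀ t : ℝ, Continuous (F t))
    (hlim : ∀ x : X, Filter.Tendsto (fun t => F t x) Filter.atTop (nhds (f x))) :
    IsMeagre {x : X | ¬ ContinuousAt f x} := by
  set g : ℕ → X → (Fin m → ℝ) := fun n => F n with hg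
  have hgc : ∀ n, Continuous (g n) := fun n => hcont n
  have hgl : ∀ x, Tendsto (fun n : ℕ => g n x) atTop (nhds (f x)) := fun x =>
    (hlim x).comp tendsto_natCast_atTop_atTop
  -- the closed sets A ε N
  set A : ℝ → ℕ → Set X := fun ε N =>
    ⋂ p, ⋂ (_ : N ≤ p), ⋂ q, ⋂ (_ : N ≤ q), {x | dist (g p x) (g q x) ≤ ε} with hA
  have hAclosed : ∀ ε N, IsClosed (A ε N) := by
    intro ε N
    refine isClosed_iInter fun p => isClosed_iInter fun _ =>
      isClosed_iInter fun q => isClosed_iInter fun _ => ?_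
    exact isClosed_le (Continuous.dist (hgc p) (hgc q)) continuous_const
  have hAcover : ∀ ε > 0, ∀ x, ∃ N, x ∈ A ε N := by
    intro ε hε x
    have hc : CauchySeq (fun n : ℕ => g n x) := (hgl x).cauchySeq
    rcases Metric.cauchySeq_iff.1 hc ε hε with ⟨N, hN⟩
    refine ⟨N, ?_⟩
    simp only [hA, mem_iInter, mem_setOf_eq]
    intro p hp q hq
    exact (hN p hp q hq).le
  -- in A ε N, f is within ε of g N
  have hAf : ∀ ε N x, x ∈ A ε N → dist (f x) (g N x) ≤ ε := by
    intro ε N x hx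
    simp only [hA, mem_iInter, mem_setOf_eq] at hx
    have : Tendsto (fun p : ℕ => dist (g p x) (g N x)) atTop (nhds (dist (f x) (g N x))) :=
      (hgl x).dist tendsto_const_nhds
    refine le_of_tendsto this (eventually_atTop.2 ⟨N, fun p hp => hx p hp N le_rfl⟩)
  -- the dense open sets
  set G : ℝ → Set X := fun ε => ⋃ N, interior (A ε N) with hG
  have hGopen : ∀ ε, IsOpen (G ε) := fun ε => isOpen_iUnion fun N => isOpen_interior
  have hGdense : ∀ ε > 0, Dense (G ε) := by
    intro ε hε
    refine IsGδ.dense_iUnion_interior_of_closed (s := univ) .univ dense_univ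
      (hAclosed ε) fun x _ => ?_
    rcases hAcover ε hε x with ⟨N, hN⟩
    exact mem_iUnion.2 ⟨N, hN⟩
  -- on the intersection, f is continuous
  have hCont : ∀ x ∈ ⋂ k : ℕ, G (1 / (k + 1)), ContinuousAt f x := by
    intro x hx
    rw [ContinuousAt, Metric.tendsto_nhds]
    intro ε hε
    rcases exists_nat_one_div_lt (by positivity : (0:ℝ) < ε / 3) with ⟨k, hk⟩
    set δ : ℝ := 1 / (k + 1) with hδ
    have hδpos : 0 < δ := by positivity
    have hxk := mem_iInter.1 hx k
    rcases mem_iUnion.1 hxk with ⟨N, hN⟩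
    have hxA : x ∈ A δ N := interior_subset hN
    have h1 : ∀ᶠ y in 𝓝 x, y ∈ A δ N :=
      (eventually_mem_nhds_iff.mpr ((isOpen_interior.mem_nhds hN))).mono
        fun y hy => interior_subset (mem_of_mem_nhds hy)
    have h2 : ∀ᶠ y in 𝓝 x, dist (g N y) (g N x) < δ :=
      Metric.tendsto_nhds.1 (hgc N).continuousAt δ hδpos
    filter_upwards [h1, h2] with y hy1 hy2
    have d1 : dist (f y) (g N y) ≤ δ := hAf δ N y hy1
    have d3 : dist (g N x) (f x) ≤ δ := by
      rw [dist_comm]; exact hAf δ N x hxA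
    calc dist (f y) (f x) ≤ dist (f y) (g N y) + dist (g N y) (g N x) + dist (g N x) (f x) :=
          dist_triangle4 _ _ _ _
      _ < δ + δ + δ := by linarith
      _ < ε := by rw [hδ]; linarith
  -- conclude
  rw [IsMeagre]
  have : (⋂ k : ℕ, G (1 / (k + 1))) ⊆ {x : X | ¬ ContinuousAt f x}ᶜ := fun x hx =>
    not_not.2 (hCont x hx)
  refine mem_of_superset ?_ this
  exact (countable_iInter_mem).2 fun k =>
    residual_of_dense_open (hGopen _) (hGdense _ (by positivity))
end

section
/- (Pettis theorem) Let G be a topological group and A ⊆ G a set with the Baire property (A = U Δ P with U open and P meager). If A is nonmeager, then A⁻¹A (respectively, A − A in the abelian additive case) contains an open neighborhood of the identity. -/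
/-!
Since `A ⊆ U ∪ P`, the open set `U` is nonmeagre. By the Banach category theorem (a union of
open meagre sets is meagre) some `x ∈ U` has only nonmeagre open neighbourhoods. If `x * g ∈ U`,
then `U ∩ U g⁻¹` is such a neighbourhood, so it contains a point `y` outside the meagre set
`P ∪ P g⁻¹`; both `y` and `y * g` lie in `U \ P ⊆ A`, whence `g = y⁻¹ * (y * g) ∈ A⁻¹ * A`.
-/

open Pointwise Set

theorem exists_maximal_pairwiseDisjoint_subset {α : Type*} [PartialOrder α] [OrderBot α]
    (s : Set α) : ∃ F, Maximal (fun F : Set α => F ⊆ s ∧ F.PairwiseDisjoint id) F :=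
  zorn_subset _ fun c hcs hc =>
    ⟨⋃₀ c, ⟨sUnion_subset fun _ hF => (hcs hF).1,
      (pairwiseDisjoint_sUnion hc.directedOn).2 fun _ hF => (hcs hF).2⟩,
      fun _ => subset_sUnion_of_mem⟩

section Meagre

variable {X : Type*} [TopologicalSpace X]

theorem isNowhereDense_biUnion_of_pairwiseDisjoint {ι : Type*} {s : Set ι} {V N : ι → Set X}
    (hV : ∀ i ∈ s, IsOpen (V i)) (hdisj : s.PairwiseDisjoint V)
    (hN : ∀ i ∈ s, IsNowhereDense (N i)) (hNV : ∀ i ∈ s, N i ⊆ V i) :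
    IsNowhereDense (⋃ i ∈ s, N i) := by
  set S := ⋃ i ∈ s, N i
  rw [IsNowhereDense, eq_empty_iff_forall_notMem]
  intro x hx
  have hSV : S ⊆ ⋃ i ∈ s, V i := biUnion_mono subset_rfl hNV
  obtain ⟨y, hyS, hyV⟩ :=
    mem_closure_iff.1 (closure_mono hSV (interior_subset hx)) _ isOpen_interior hx
  obtain ⟨j, hj, hyj⟩ := mem_iUnion₂.1 hyV
  have hSj : S ∩ V j ⊆ N j := by
    rintro z ⟨hzS, hzj⟩
    obtain ⟨i, hi, hzi⟩ := mem_iUnion₂.1 hzS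
    rwa [hdisj.elim_set hi hj z (hNV i hi hzi) hzj] at hzi
  have hsub : interior (closure S) ∩ V j ⊆ interior (closure (N j)) :=
    interior_maximal
      (((inter_subset_inter_left _ interior_subset).trans ((hV j hj).closure_inter)).trans
        (closure_mono hSj))
      (isOpen_interior.inter (hV j hj))
  rw [hN j hj] at hsub
  exact hsub ⟨hyS, hyj⟩

theorem IsMeagre.exists_iUnion_isNowhereDense_eq {s : Set X} (hs : IsMeagre s) :
    ∃ f : ℕ → Set X, (∀ n, IsNowhereDense (f n)) ∧ ⋃ n, f n = s := by
  obtain ⟨S, hSnd, hSc, hsS⟩ := isMeagre_iff_countable_union_isNowhereDense.1 hs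
  obtain ⟨g, hg⟩ := (hSc.insert ∅).exists_eq_range (insert_nonempty ∅ S)
  have hgnd : ∀ n, IsNowhereDense (g n) := by
    intro n
    rcases (hg ▸ mem_range_self n : g n ∈ insert ∅ S) with h | h
    · exact h ▸ isNowhereDense_empty
    · exact hSnd _ h
  refine ⟨fun n => g n ∩ s, fun n => (hgnd n).mono inter_subset_left, ?_⟩
  rw [← iUnion_inter, inter_eq_right, ← sUnion_range, ← hg, sUnion_insert, empty_union]
  exact hsS

/-- **Banach category theorem**. The union `T` of a maximal disjoint family of open meagre sets
is meagre, and every open meagre set lies in `closure T = T ∪ frontier T`. -/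
theorem isMeagre_sUnion_of_isOpen {𝒰 : Set (Set X)} (h𝒰 : ∀ U ∈ 𝒰, IsOpen U ∧ IsMeagre U) :
    IsMeagre (⋃₀ 𝒰) := by
  obtain ⟨F, ⟨hF, hFdisj⟩, hFmax⟩ :=
    exists_maximal_pairwiseDisjoint_subset {U : Set X | IsOpen U ∧ IsMeagre U}
  set T := ⋃₀ F with hTF
  have hTopen : IsOpen T := isOpen_sUnion fun V hV => (hF hV).1
  have hcover : ⋃₀ 𝒰 ⊆ closure T := by
    rintro x ⟨U, hU, hxU⟩
    by_contra hxT
    -- `U \ closure T` is open, meagre and disjoint from every member of `F`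
    have hW : U \ closure T ∈ F :=
      hFmax (y := insert (U \ closure T) F)
        ⟨insert_subset ⟨(h𝒰 U hU).1.sdiff isClosed_closure, (h𝒰 U hU).2.mono sdiff_subset⟩ hF,
        hFdisj.insert fun V hV _ =>
          disjoint_left.2 fun _ hz hzV => hz.2 (subset_closure ⟨V, hV, hzV⟩)⟩
        (subset_insert _ _) (mem_insert _ _)
    exact hxT (subset_closure (mem_sUnion_of_mem (show x ∈ U \ closure T from ⟨hxU, hxT⟩) hW))
  choose! N hNnd hNV using fun V (hV : V ∈ F) => (hF hV).2.exists_iUnion_isNowhereDense_eq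
  have hT : T = ⋃ n, ⋃ V ∈ F, N V n :=
    calc T = ⋃ V ∈ F, ⋃ n, N V n := by
          rw [hTF, sUnion_eq_biUnion]; exact (iUnion₂_congr hNV).symm
      _ = ⋃ n, ⋃ V ∈ F, N V n := by simp only [iUnion_comm (ι := ℕ)]
  have hTmeagre : IsMeagre T := hT ▸ isMeagre_iUnion fun n =>
    (isNowhereDense_biUnion_of_pairwiseDisjoint (fun V hV => (hF hV).1) hFdisj
      (fun V hV => hNnd V hV n) fun V hV => (subset_iUnion (N V) n).trans (hNV V hV).le).isMeagre
  have hfrontier : IsMeagre (frontier T) := by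
    refine (isClosed_frontier.isNowhereDense_iff.2 ?_).isMeagre
    rw [← frontier_compl]
    exact interior_frontier hTopen.isClosed_compl
  exact (hTmeagre.union hfrontier).mono (closure_eq_self_union_frontier T ▸ hcover)

theorem exists_mem_forall_isOpen_not_isMeagre {s : Set X} (hs : ¬ IsMeagre s) :
    ∃ x ∈ s, ∀ O, IsOpen O → x ∈ O → ¬ IsMeagre O := by
  have hM := isMeagre_sUnion_of_isOpen (𝒰 := {O : Set X | IsOpen O ∧ IsMeagre O}) fun _ => id
  obtain ⟨x, hxs, hxM⟩ := not_subset.1 fun h => hs (hM.mono h)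
  exact ⟨x, hxs, fun O hO hxO hOm => hxM ⟨O, ⟨hO, hOm⟩, hxO⟩⟩

end Meagre

theorem mem_inv_mul_sdiff_of_not_isMeagre {G : Type*} [Group G] [TopologicalSpace G]
    [ContinuousMul G] {U P : Set G} {g : G} (hP : IsMeagre P)
    (hg : ¬ IsMeagre (U ∩ (· * g) ⁻¹' U)) : g ∈ (U \ P)⁻¹ * (U \ P) := by
  have hPg : IsMeagre ((· * g) ⁻¹' P) :=
    hP.preimage_of_isOpenMap (continuous_mul_const g) (Homeomorph.mulRight g).isOpenMap
  obtain ⟨y, ⟨hyU, hygU⟩, hy⟩ := not_subset.1 fun h => hg ((hP.union hPg).mono h)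
  rw [mem_union, not_or] at hy
  simpa using mul_mem_mul (inv_mem_inv.2 (show y ∈ U \ P from ⟨hyU, hy.1⟩))
    (show y * g ∈ U \ P from ⟨hygU, hy.2⟩)

/-- (Pettis theorem) Let `G` be a topological group and `A ⊆ G` a set with the Baire
property (`A = U ∆ P` with `U` open and `P` meager).  If `A` is nonmeager, then
`A⁻¹ * A` contains an open neighborhood of the identity. -/
theorem stmt5 {G : Type*} [Group G] [TopologicalSpace G] [IsTopologicalGroup G]
    (A U P : Set G) (hU : IsOpen U) (hP : IsMeagre P) (hA : A = symmDiff U P)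
    (hnm : ¬ IsMeagre A) :
    ∃ V : Set G, IsOpen V ∧ (1 : G) ∈ V ∧ V ⊆ A⁻¹ * A := by
  have hUA : U \ P ⊆ A := hA ▸ fun _ hx => Or.inl hx
  have hUnm : ¬ IsMeagre U := fun h => hnm ((h.union hP).mono (hA ▸ symmDiff_subset_union))
  obtain ⟨x, hxU, hx⟩ := exists_mem_forall_isOpen_not_isMeagre hUnm
  refine ⟨(x * ·) ⁻¹' U, hU.preimage (continuous_const_mul x), by simpa using hxU, fun g hg => ?_⟩
  have hxg : ¬ IsMeagre (U ∩ (· * g) ⁻¹' U) :=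
    hx _ (hU.inter (hU.preimage (continuous_mul_const g))) ⟨hxU, hg⟩
  exact mul_subset_mul (inv_subset_inv.2 hUA) hUA (mem_inv_mul_sdiff_of_not_isMeagre hP hxg)
end

section
/- Let A be a subset of ℝⁿ⁺ᵐ which is open. Then the bad set B_n(A) := {x ∈ ℝⁿ : (closure A)_x \ closure(A_x) ≠ ∅} is a meager F_σ subset of ℝⁿ, where A_x = {y ∈ ℝᵐ : (x,y) ∈ A} and (closure A)_x is the fiber of the closure. -/
open Set Metric

lemma nwd_isMeagre {X : Type*} [TopologicalSpace X] {s : Set X}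
    (hc : IsClosed s) (hi : interior s = ∅) : IsMeagre s := by
  rw [isMeagre_iff_countable_union_isNowhereDense]
  exact ⟨{s}, by simpa [hc.isNowhereDense_iff] using hi, countable_singleton s, by simp⟩

/-- If `A ⊆ ℝⁿ × ℝᵐ` is open, then the bad set
`B_n(A) = {x ∈ ℝⁿ : (closure A)_x \ closure (A_x) ≠ ∅}` is a meager `F_σ` subset
of `ℝⁿ`. -/
theorem stmt6 (n m : ℕ) (A : Set ((Fin n → ℝ) × (Fin m → ℝ))) (hA : IsOpen A) :
    IsMeagre {x : Fin n → ℝ |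
        ∃ y : Fin m → ℝ, (x, y) ∈ closure A ∧ y ∉ closure {y' | (x, y') ∈ A}} ∧
    ∃ C : ℕ → Set (Fin n → ℝ), (∀ k, IsClosed (C k)) ∧
      {x : Fin n → ℝ |
          ∃ y : Fin m → ℝ, (x, y) ∈ closure A ∧ y ∉ closure {y' | (x, y') ∈ A}} =
        ⋃ k, C k := by
  set B := {x : Fin n → ℝ |
      ∃ y : Fin m → ℝ, (x, y) ∈ closure A ∧ y ∉ closure {y' | (x, y') ∈ A}} with hB
  -- index type
  let ι := (Fin m → ℚ) × {r : ℚ // 0 < r}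
  let qc : (Fin m → ℚ) → (Fin m → ℝ) := fun q i => (q i : ℝ)
  let D : ι → Set (Fin n → ℝ) := fun p =>
    {x | ∃ y : Fin m → ℝ, dist y (qc p.1) ≤ (p.2 : ℚ) ∧ (x, y) ∈ closure A} ∩
    {x | ∀ y : Fin m → ℝ, dist y (qc p.1) ≤ 2 * (p.2 : ℚ) → (x, y) ∉ A}
  have hDclosed : ∀ p, IsClosed (D p) := by
    intro ⟨q, r⟩
    apply IsClosed.inter
    · -- projection of closed set along compact ball
      have hK : IsCompact (closedBall (qc q) ((r : ℚ) : ℝ)) := isCompact_closedBall _ _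
      have : CompactSpace (closedBall (qc q) ((r : ℚ) : ℝ)) :=
        isCompact_iff_compactSpace.mp hK
      have hmap : IsClosedMap
          (Prod.fst : (Fin n → ℝ) × closedBall (qc q) ((r : ℚ) : ℝ) → (Fin n → ℝ)) :=
        isClosedMap_fst_of_compactSpace
      have hS : IsClosed {p : (Fin n → ℝ) × closedBall (qc q) ((r : ℚ) : ℝ) |
          (p.1, (p.2 : Fin m → ℝ)) ∈ closure A} := by
        exact isClosed_closure.preimage (by fun_prop)
      have := hmap _ hS
      convert this using 1
      ext x
      constructor
      · rintro ⟨y, hy1, hy2⟩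
        exact ⟨(x, ⟨y, mem_closedBall.mpr hy1⟩), hy2, rfl⟩
      · rintro ⟨⟨x', y⟩, hy, rfl⟩
        exact ⟨y, mem_closedBall.mp y.2, hy⟩
    · rw [← isOpen_compl_iff]
      have : {x : Fin n → ℝ |
          ∀ y : Fin m → ℝ, dist y (qc q) ≤ 2 * (r : ℚ) → (x, y) ∉ A}ᶜ =
          ⋃ y ∈ {y : Fin m → ℝ | dist y (qc q) ≤ 2 * (r : ℚ)},
            (fun x => (x, y)) ⁻¹' A := by
        ext x; simp [not_forall]
      rw [this]
      exact isOpen_biUnion fun y _ => hA.preimage (by fun_prop)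
  have hBeq : B = ⋃ p, D p := by
    ext x
    simp only [hB, mem_setOf_eq, mem_iUnion]
    constructor
    · rintro ⟨y, hyc, hyn⟩
      rw [Metric.mem_closure_iff] at hyn
      push_neg at hyn
      obtain ⟨ε, hε, hεA⟩ := hyn
      obtain ⟨r, hr0, hr⟩ := exists_rat_btwn (show (0:ℝ) < ε / 3 by linarith)
      have hr0' : 0 < r := by exact_mod_cast hr0
      -- choose rational q near y
      have hq : ∀ i, ∃ qi : ℚ, dist (y i) ((qi : ℝ)) ≤ (r : ℝ) := by
        intro i
        obtain ⟨qi, h1, h2⟩ := exists_rat_btwn (show y i < y i + r by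
          have : (0:ℝ) < r := by exact_mod_cast hr0'
          linarith)
        exact ⟨qi, by rw [Real.dist_eq]; rw [abs_le]; constructor <;> linarith⟩
      choose q hqd using hq
      refine ⟨⟨q, ⟨r, hr0'⟩⟩, ⟨y, ?_, hyc⟩, ?_⟩
      · exact dist_pi_le_iff (by positivity) |>.mpr fun i => hqd i
      · intro z hz hzA
        have h1 : dist y (qc q) ≤ (r : ℝ) := dist_pi_le_iff (by positivity) |>.mpr fun i => hqd i
        have : dist y z ≤ dist y (qc q) + dist z (qc q) := dist_triangle_right y z (qc q)
        have hlt : dist y z < ε := by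
          push_cast at hz ⊢
          linarith
        exact absurd hlt (not_lt.mpr (hεA z hzA))
    · rintro ⟨⟨q, r⟩, ⟨y, hyd, hyc⟩, h2⟩
      refine ⟨y, hyc, ?_⟩
      rw [Metric.mem_closure_iff]
      push_neg
      refine ⟨(r : ℝ), by exact_mod_cast r.2, fun z hz => ?_⟩
      by_contra hlt
      push_neg at hlt
      have : dist z (qc q) ≤ dist z y + dist y (qc q) := dist_triangle z y (qc q)
      exact h2 z (by push_cast; linarith [dist_comm y z ▸ hlt]) hz
  have hDnwd : ∀ p, interior (D p) = ∅ := by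
    rintro ⟨q, r⟩
    by_contra h
    obtain ⟨x, hx⟩ := Set.nonempty_iff_ne_empty.mpr h
    have hxD : x ∈ D (q, r) := interior_subset hx
    obtain ⟨⟨y, hyd, hyc⟩, hx2⟩ := hxD
    have hnbhd : interior (D (q, r)) ×ˢ Metric.ball y ((r : ℚ) : ℝ) ∈ nhds ((x, y)) := by
      apply IsOpen.mem_nhds
      · exact isOpen_interior.prod Metric.isOpen_ball
      · exact ⟨hx, Metric.mem_ball_self (by exact_mod_cast r.2)⟩
    have := mem_closure_iff_nhds.mp hyc _ hnbhd
    obtain ⟨⟨a, b⟩, ⟨haD, hbB⟩, habA⟩ := this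
    have haD' : a ∈ D (q, r) := interior_subset haD
    have hbd : dist b (qc q) ≤ 2 * ((r : ℚ) : ℝ) := by
      have h1 : dist b y < (r : ℝ) := mem_ball.mp hbB
      have h2 : dist y (qc q) ≤ (r : ℝ) := hyd
      calc dist b (qc q) ≤ dist b y + dist y (qc q) := dist_triangle _ _ _
        _ ≤ 2 * (r : ℝ) := by linarith
    exact haD'.2 b (by push_cast at hbd ⊢; linarith) habA
  -- reindex by ℕ
  obtain ⟨f, hf⟩ := exists_surjective_nat ι
  have hUnion : ⋃ k, D (f k) = ⋃ p, D p := hf.iUnion_comp D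
  constructor
  · rw [hBeq, ← hUnion]
    exact isMeagre_iUnion fun k => nwd_isMeagre (hDclosed _) (hDnwd _)
  · exact ⟨fun k => D (f k), fun k => hDclosed _, by rw [hBeq, hUnion]⟩
end

section
/- Let X be a topological space and suppose X = A ∪ B where A is open in X. Then the Pillay rank satisfies RK(X) ≤ RK(B) + RK(A) + 1, where + denotes ordinal addition. -/
/-- Auxiliary definition by well-founded recursion on ordinals. -/
noncomputable def PRankGeAux {X : Type u} [TopologicalSpace X] :
    Ordinal.{u} → Set X → Prop :=
  WellFounded.fix Ordinal.lt_wf fun α ih S =>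
    S.Nonempty ∧ ∀ β (h : β < α), ∃ Y : Set X, Y ⊆ S ∧ Y = closure Y ∩ S ∧
      (¬ ∃ U : Set X, IsOpen U ∧ (U ∩ S).Nonempty ∧ U ∩ S ⊆ closure Y) ∧ ih β h Y

/-- `PRankGe S α` expresses that the Pillay rank of the subset `S` (with its subspace
topology) is at least the ordinal `α`: `S` is nonempty, and for every `β < α` there is a
subset `Y ⊆ S` which is closed in `S` (i.e. `Y = closure Y ∩ S`), nowhere dense in `S`
(no nonempty relatively open subset of `S` is contained in the closure of `Y`), and of
rank at least `β`. -/
noncomputable def PRankGe {X : Type u} [TopologicalSpace X] (S : Set X)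
    (α : Ordinal.{u}) : Prop :=
  PRankGeAux α S

/-!
Induct on `α` to show: if `S ∩ A` has rank `< α` and `S ∩ B` has rank `≤ b`, then `S` has
rank `≤ b + α`. If `S ∩ A = ∅` then `S ⊆ B`. Otherwise some `γ < α` admits no closed nowhere
dense subset of `S ∩ A` of rank `≥ γ`. Were the rank of `S` at least `b + γ + 2`, it would have
a closed nowhere dense subset `Y` of rank `≥ b + γ + 1`; since `A` is open, `Y ∩ A` is closed
nowhere dense in `S ∩ A`, so it has rank `< γ`, and the induction hypothesis applied to `Y`
bounds its rank by `b + γ`.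
-/

open Set

variable {X : Type u} [TopologicalSpace X]

/-- `Y` is closed and nowhere dense in the subspace `S`: the witnesses in `PRankGe`. -/
def IsClosedNowhereDenseIn (Y S : Set X) : Prop :=
  Y ⊆ S ∧ Y = closure Y ∩ S ∧ ¬ ∃ U : Set X, IsOpen U ∧ (U ∩ S).Nonempty ∧ U ∩ S ⊆ closure Y

theorem prankGe_iff {S : Set X} {α : Ordinal.{u}} :
    PRankGe S α ↔ S.Nonempty ∧ ∀ β < α, ∃ Y, IsClosedNowhereDenseIn Y S ∧ PRankGe Y β := by
  unfold PRankGe PRankGeAux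
  rw [WellFounded.fix_eq]
  simp only [IsClosedNowhereDenseIn, and_assoc]

namespace IsClosedNowhereDenseIn

theorem closure_inter {Y S T : Set X} (hY : IsClosedNowhereDenseIn Y S) (hST : S ⊆ T) :
    IsClosedNowhereDenseIn (closure Y ∩ T) T := by
  obtain ⟨hYS, -, hYnd⟩ := hY
  have hcl : closure (closure Y ∩ T) = closure Y :=
    (closure_minimal inter_subset_left isClosed_closure).antisymm
      (closure_mono fun x hx => ⟨subset_closure hx, hST (hYS hx)⟩)
  refine ⟨inter_subset_right, by rw [hcl], ?_⟩
  rintro ⟨U, hU, ⟨x, hxU, hxT⟩, hUY⟩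
  rw [hcl] at hUY
  obtain ⟨y, hyU, hyY⟩ := mem_closure_iff.1 (hUY ⟨hxU, hxT⟩) U hU hxU
  exact hYnd ⟨U, hU, ⟨y, hyU, hYS hyY⟩, fun w hw => hUY ⟨hw.1, hST hw.2⟩⟩

theorem inter_isOpen {Y S A : Set X} (hY : IsClosedNowhereDenseIn Y S) (hA : IsOpen A) :
    IsClosedNowhereDenseIn (Y ∩ A) (S ∩ A) := by
  obtain ⟨hYS, hYcl, hYnd⟩ := hY
  refine ⟨inter_subset_inter_left A hYS, ?_, ?_⟩
  · ext x
    refine ⟨fun hx => ⟨subset_closure hx, hYS hx.1, hx.2⟩, ?_⟩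
    rintro ⟨hxY, hxS, hxA⟩
    rw [hYcl]
    exact ⟨⟨closure_mono inter_subset_left hxY, hxS⟩, hxA⟩
  · rintro ⟨U, hU, ⟨x, hxU, hxS, hxA⟩, hUY⟩
    refine hYnd ⟨U ∩ A, hU.inter hA, ⟨x, ⟨hxU, hxA⟩, hxS⟩, ?_⟩
    rintro w ⟨⟨hwU, hwA⟩, hwS⟩
    exact closure_mono inter_subset_left (hUY ⟨hwU, hwS, hwA⟩)

end IsClosedNowhereDenseIn

namespace PRankGe

theorem mono {S : Set X} {α β : Ordinal.{u}} (h : PRankGe S α) (hβα : β ≤ α) :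
    PRankGe S β := by
  rw [prankGe_iff] at h ⊢
  exact ⟨h.1, fun γ hγ => h.2 γ (hγ.trans_le hβα)⟩

theorem superset {S T : Set X} {α : Ordinal.{u}} (h : PRankGe S α) (hST : S ⊆ T) :
    PRankGe T α := by
  induction α using WellFoundedLT.induction generalizing S T with
  | _ α ih =>
    rw [prankGe_iff] at h ⊢
    refine ⟨h.1.mono hST, fun β hβ => ?_⟩
    obtain ⟨Y, hY, hYrk⟩ := h.2 β hβ
    exact ⟨closure Y ∩ T, hY.closure_inter hST,
      ih β hβ hYrk fun x hx => ⟨subset_closure hx, hST (hY.1 hx)⟩⟩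

theorem exists_of_add_one {S : Set X} {β : Ordinal.{u}} (h : PRankGe S (β + 1)) :
    ∃ Y, IsClosedNowhereDenseIn Y S ∧ PRankGe Y β :=
  (prankGe_iff.1 h).2 β (Order.lt_add_one_iff.2 le_rfl)

end PRankGe

theorem exists_lt_forall_not_prankGe {S : Set X} {α : Ordinal.{u}} (hS : S.Nonempty)
    (h : ¬ PRankGe S α) :
    ∃ γ < α, ∀ Y, IsClosedNowhereDenseIn Y S → ¬ PRankGe Y γ := by
  rw [prankGe_iff] at h
  push Not at h
  simpa only [not_and'] using h hS

theorem not_prankGe_add_add_one {A B : Set X} (hcover : A ∪ B = univ) (hA : IsOpen A)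
    (b α : Ordinal.{u}) {S : Set X} (hSA : ¬ PRankGe (S ∩ A) α)
    (hSB : ¬ PRankGe (S ∩ B) (b + 1)) : ¬ PRankGe S (b + α + 1) := by
  induction α using WellFoundedLT.induction generalizing S with
  | _ α ih =>
    intro hS
    rcases (S ∩ A).eq_empty_or_nonempty with hSA_empty | hSA_ne
    · have hSB_eq : S ∩ B = S := inter_eq_left.2 fun x hx =>
        (hcover.symm ▸ mem_univ x : x ∈ A ∪ B).resolve_left fun hxA =>
          hSA_empty.subset ⟨hx, hxA⟩
      rw [hSB_eq] at hSB
      refine hSB (hS.mono ?_)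
      rw [add_assoc]
      exact (add_le_add_iff_left b).2 le_add_self
    · obtain ⟨γ, hγα, hγ⟩ := exists_lt_forall_not_prankGe hSA_ne hSA
      have hle : b + γ + 1 + 1 ≤ b + α + 1 := by
        rw [add_assoc b γ]
        gcongr
        exact Order.add_one_le_iff.2 hγα
      obtain ⟨Y, hY, hYrk⟩ := (hS.mono hle).exists_of_add_one
      exact ih γ hγα (hγ _ (hY.inter_isOpen hA))
        (fun hYB => hSB (hYB.superset (inter_subset_inter_left B hY.1))) hYrk

/-- If the topological space `X` is the union of an open set `A` and a set `B`, and the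
Pillay ranks of `A` and `B` are the ordinals `a` and `b` respectively, then
`RK(X) ≤ b + a + 1` (ordinal sum), i.e. `X` does not have rank `≥ b + a + 1 + 1`. -/
theorem stmt9 {X : Type u} [TopologicalSpace X] (A B : Set X)
    (hcover : A ∪ B = Set.univ) (hA : IsOpen A) (a b : Ordinal.{u})
    (hrkA : PRankGe A a ∧ ¬ PRankGe A (a + 1))
    (hrkB : PRankGe B b ∧ ¬ PRankGe B (b + 1)) :
    ¬ PRankGe (Set.univ : Set X) (b + a + 1 + 1) := by
  rw [add_assoc b a]
  exact not_prankGe_add_add_one hcover hA b (a + 1)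
    (by rw [univ_inter]; exact hrkA.2) (by rw [univ_inter]; exact hrkB.2)
end

section
/- Let F be a nonarchimedean Cauchy complete ordered field with countable dense subset. Then the natural valuation topology on F coincides with the order topology, and F admits a complete separable metric inducing this topology; hence F is a Polish space. -/
/-- The valuation ball around `x` of "radius" `c ≠ 0` for the natural valuation of an
ordered field: the set of `y` with `v (x - y) > v c`, i.e. `n * |x - y| < |c|` for all
natural numbers `n`. -/
def valBall {F : Type u} [Field F] [LinearOrder F] [IsStrictOrderedRing F] (x c : F) : Set F :=
  {y | ∀ n : ℕ, (n : F) * |x - y| < |c|}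

/-- The topology on an ordered field generated by the valuation balls of the natural
valuation. -/
def valTopology (F : Type u) [Field F] [LinearOrder F] [IsStrictOrderedRing F] : TopologicalSpace F :=
  TopologicalSpace.generateFrom {s : Set F | ∃ x c : F, c ≠ 0 ∧ s = valBall x c}

/-!
A nonarchimedean field has a positive infinitesimal `δ`, so the order interval of radius `|c| * δ`
around `x` lies in the valuation ball of radius `c`; conversely a valuation ball lies in the order
interval of the same radius and, being an ultrametric ball, is a neighbourhood of each of its
points. Hence the valuation and order topologies agree.

The order topology is that of the additive uniformity, which is countably generated when `F` is
separable, hence metrizable. A Cauchy sequence converges to the least upper bound of its lower cut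
`{y | y + δ ≤ u i eventually, for some δ > 0}`: if that bound did not exist the cut would be a
regular gap. Separable and completely metrizable, `F` is Polish.
-/

open Filter Topology Set Uniformity TopologicalSpace

section OrderedField

variable {F : Type*} [Field F] [LinearOrder F] [IsStrictOrderedRing F] {x y c : F}

theorem mem_valBall_self (hc : c ≠ 0) : x ∈ valBall x c := by
  intro n
  simp [abs_pos.2 hc]

theorem abs_sub_lt_of_mem_valBall (h : y ∈ valBall x c) : |x - y| < |c| := by
  simpa using h 1

theorem valBall_subset_of_mem (h : y ∈ valBall x c) : valBall y c ⊆ valBall x c := by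
  intro z hz n
  have hxy := h (2 * n)
  have hyz := hz (2 * n)
  push_cast at hxy hyz
  have htri : |x - z| ≤ |x - y| + |y - z| := abs_sub_le x y z
  have hn : (0 : F) ≤ n := n.cast_nonneg
  nlinarith [abs_nonneg (x - y), abs_nonneg (y - z)]

theorem exists_pos_forall_nat_mul_lt_one (hF : ¬ Archimedean F) :
    ∃ δ : F, 0 < δ ∧ ∀ n : ℕ, n * δ < 1 := by
  simp only [archimedean_iff_nat_le, not_forall, not_exists, not_le] at hF
  obtain ⟨M, hM⟩ := hF
  have hM0 : 0 < M := by simpa using hM 0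
  exact ⟨M⁻¹, inv_pos.2 hM0, fun n => by rw [← div_eq_mul_inv, div_lt_one hM0]; exact hM n⟩

end OrderedField

/-- Cauchy completeness of an ordered field, phrased through cuts: no cut without endpoints has
sides coming arbitrarily close. -/
def NoRegularGap (F : Type*) [Field F] [LinearOrder F] [IsStrictOrderedRing F] : Prop :=
  ∀ L R : Set F, L ∪ R = Set.univ → L ∩ R = ∅ → L.Nonempty → R.Nonempty →
    (∀ x ∈ L, ∀ y ∈ R, x < y) → (¬ ∃ m, IsGreatest L m) → (¬ ∃ m, IsLeast R m) →
    ¬ (∀ ε : F, 0 < ε → ∃ x ∈ L, ∃ y ∈ R, y - x < ε)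

section Cauchy

variable {F : Type*} [Field F] [LinearOrder F] [IsStrictOrderedRing F]

def lowerCut (u : ℕ → F) : Set F :=
  {y | ∃ δ > 0, ∀ᶠ i in atTop, y + δ ≤ u i}

variable {u : ℕ → F} {y z m ε : F}

theorem mem_lowerCut_of_le (hy : y ∈ lowerCut u) (hzy : z ≤ y) : z ∈ lowerCut u := by
  obtain ⟨δ, hδ, hev⟩ := hy
  exact ⟨δ, hδ, hev.mono fun i hi => by linarith⟩

theorem lt_of_mem_lowerCut_of_notMem (hy : y ∈ lowerCut u) (hz : z ∉ lowerCut u) : y < z :=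
  lt_of_not_ge fun hzy => hz (mem_lowerCut_of_le hy hzy)

theorem not_exists_isGreatest_lowerCut : ¬ ∃ m, IsGreatest (lowerCut u) m := by
  rintro ⟨m, ⟨δ, hδ, hev⟩, hmax⟩
  have : m + δ / 2 ∈ lowerCut u := ⟨δ / 2, by linarith, hev.mono fun i hi => by linarith⟩
  linarith [hmax this]

variable (hu : ∀ ε > 0, ∃ N, ∀ m ≥ N, ∀ n ≥ N, |u n - u m| < ε)
include hu

theorem exists_sub_mem_lowerCut_add_notMem (hε : 0 < ε) :
    ∃ N, u N - ε ∈ lowerCut u ∧ u N + ε ∉ lowerCut u := by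
  obtain ⟨N, hN⟩ := hu (ε / 2) (by linarith)
  have hclose : ∀ i ≥ N, |u i - u N| < ε / 2 := fun i hi => hN N le_rfl i hi
  refine ⟨N, ⟨ε / 2, by linarith, eventually_atTop.2 ⟨N, fun i hi => ?_⟩⟩, ?_⟩
  · linarith [(abs_lt.1 (hclose i hi)).1]
  · rintro ⟨δ, hδ, hev⟩
    obtain ⟨i, hi, hiN⟩ := (hev.and (eventually_ge_atTop N)).exists
    linarith [(abs_lt.1 (hclose i hiN)).2]

theorem eventually_abs_sub_lt_of_isLeast_compl_lowerCut (hm : IsLeast (lowerCut u)ᶜ m)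
    (hε : 0 < ε) :
    ∀ᶠ i in atTop, |u i - m| < ε := by
  obtain ⟨N, hN⟩ := hu (ε / 2) (by linarith)
  have hlow : m - ε / 2 ∈ lowerCut u := by
    by_contra h
    linarith [hm.2 h]
  obtain ⟨δ, hδ, hev⟩ := hlow
  filter_upwards [hev, eventually_ge_atTop N] with i hi hiN
  refine abs_lt.2 ⟨by linarith, lt_of_not_ge fun hbig => hm.1 ?_⟩
  -- a single late term above `m + ε` drags every later term above `m + ε / 2`
  refine ⟨ε / 2, by linarith, eventually_atTop.2 ⟨N, fun j hj => ?_⟩⟩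
  linarith [(abs_lt.1 (hN i hiN j hj)).1]

theorem exists_tendsto_of_noRegularGap (hF : NoRegularGap F) :
    ∃ m, ∀ ε > 0, ∀ᶠ i in atTop, |u i - m| < ε := by
  by_cases hleast : ∃ m, IsLeast (lowerCut u)ᶜ m
  · obtain ⟨m, hm⟩ := hleast
    exact ⟨m, fun ε hε => eventually_abs_sub_lt_of_isLeast_compl_lowerCut hu hm hε⟩
  obtain ⟨N, hlow, hup⟩ := exists_sub_mem_lowerCut_add_notMem hu one_pos
  refine absurd (fun ε hε => ?_) <| hF _ _ (union_compl_self _) (inter_compl_self _) ⟨_, hlow⟩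
    ⟨_, hup⟩ (fun _ hy _ hz => lt_of_mem_lowerCut_of_notMem hy hz)
    not_exists_isGreatest_lowerCut hleast
  obtain ⟨n, hlow, hup⟩ := exists_sub_mem_lowerCut_add_notMem hu (ε := ε / 4) (by linarith)
  exact ⟨_, hlow, _, hup, by linarith⟩

end Cauchy

section OrderTopology

variable {F : Type*} [Field F] [LinearOrder F] [IsStrictOrderedRing F] [TopologicalSpace F]
  [OrderTopology F] {x c : F}

theorem valBall_mem_nhds (hF : ¬ Archimedean F) (hc : c ≠ 0) : valBall x c ∈ 𝓝 x := by
  obtain ⟨δ, hδ, hnδ⟩ := exists_pos_forall_nat_mul_lt_one hF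
  have hcδ : 0 < |c| * δ := mul_pos (abs_pos.2 hc) hδ
  filter_upwards [(nhds_basis_abs_sub_lt x).mem_of_mem hcδ] with y hy n
  calc (n : F) * |x - y| ≤ n * (|c| * δ) := by
        rw [abs_sub_comm]; exact mul_le_mul_of_nonneg_left hy.le n.cast_nonneg
    _ = |c| * (n * δ) := by ring
    _ < |c| * 1 := mul_lt_mul_of_pos_left (hnδ n) (abs_pos.2 hc)
    _ = |c| := mul_one _

theorem isOpen_valBall (hF : ¬ Archimedean F) : IsOpen (valBall x c) := by
  refine isOpen_iff_mem_nhds.2 fun y hy => ?_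
  have hc : c ≠ 0 := abs_pos.1 (by simpa using hy 0)
  exact mem_of_superset (valBall_mem_nhds hF hc) (valBall_subset_of_mem hy)

theorem exists_valBall_subset_of_mem_nhds {s : Set F} (hs : s ∈ 𝓝 x) :
    ∃ c ≠ 0, valBall x c ⊆ s := by
  obtain ⟨ε, hε, hsub⟩ := (nhds_basis_abs_sub_lt x).mem_iff.1 hs
  refine ⟨ε, hε.ne', fun y hy => hsub ?_⟩
  simpa [abs_sub_comm, abs_of_pos hε] using abs_sub_lt_of_mem_valBall hy

theorem valTopology_eq (hF : ¬ Archimedean F) : valTopology F = ‹TopologicalSpace F› := by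
  refine le_antisymm (TopologicalSpace.le_def.2 fun s hs => ?_) ?_
  · refine (@isOpen_iff_forall_mem_open _ (valTopology F) _).2 fun x hx => ?_
    obtain ⟨c, hc, hsub⟩ := exists_valBall_subset_of_mem_nhds (hs.mem_nhds hx)
    exact ⟨valBall x c, hsub, .basic _ ⟨x, c, hc, rfl⟩, mem_valBall_self hc⟩
  · refine le_generateFrom ?_
    rintro _ ⟨x, c, -, rfl⟩
    exact isOpen_valBall hF

attribute [local instance] IsTopologicalAddGroup.rightUniformSpace

theorem uniformity_hasBasis_abs_sub_lt :
    (𝓤 F).HasBasis (fun ε : F => 0 < ε) fun ε => {p | |p.2 - p.1| < ε} := by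
  rw [uniformity_eq_comap_nhds_zero']
  simpa [← sub_eq_add_neg] using
    (nhds_basis_abs_sub_lt (0 : F)).comap fun p : F × F => p.2 + -p.1

theorem uniformity_isCountablyGenerated [SeparableSpace F] :
    (𝓤 F).IsCountablyGenerated := by
  have := SecondCountableTopology.of_separableSpace_orderTopology F
  have := isUniformAddGroup_of_addCommGroup (G := F)
  exact IsUniformAddGroup.uniformity_countably_generated

theorem completeSpace_of_noRegularGap [(𝓤 F).IsCountablyGenerated] (hF : NoRegularGap F) :
    CompleteSpace F := by
  refine UniformSpace.complete_of_cauchySeq_tendsto fun u hu => ?_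
  obtain ⟨m, hm⟩ := exists_tendsto_of_noRegularGap
    (by simpa using uniformity_hasBasis_abs_sub_lt.cauchySeq_iff.1 hu) hF
  exact ⟨m, (nhds_basis_abs_sub_lt m).tendsto_right_iff.2 hm⟩

theorem isCompletelyMetrizableSpace_of_noRegularGap [SeparableSpace F]
    (hF : NoRegularGap F) : IsCompletelyMetrizableSpace F := by
  have := uniformity_isCountablyGenerated (F := F)
  have := completeSpace_of_noRegularGap hF
  infer_instance

end OrderTopology

/-- Let `F` be a nonarchimedean Cauchy complete ordered field (Cauchy completeness being
expressed as the absence of regular gaps) with a countable dense subset.  Then the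
natural valuation topology on `F` coincides with the order topology, `F` admits a
complete metric inducing this topology, and `F` is a Polish space. -/
theorem stmt13 {F : Type u} [Field F] [LinearOrder F] [IsStrictOrderedRing F] [TopologicalSpace F] [OrderTopology F]
    (hnonarch : ¬ Archimedean F)
    (hdense : ∃ D : Set F, D.Countable ∧ Dense D)
    (hcc : ∀ L R : Set F, L ∪ R = Set.univ → L ∩ R = ∅ → L.Nonempty → R.Nonempty →
      (∀ x ∈ L, ∀ y ∈ R, x < y) → (¬ ∃ m, IsGreatest L m) → (¬ ∃ m, IsLeast R m) →
      ¬ (∀ ε : F, 0 < ε → ∃ x ∈ L, ∃ y ∈ R, y - x < ε)) :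
    valTopology F = ‹TopologicalSpace F› ∧
    (∃ m : MetricSpace F, m.toUniformSpace.toTopologicalSpace = ‹TopologicalSpace F› ∧
      @CompleteSpace F m.toUniformSpace) ∧
    PolishSpace F := by
  obtain ⟨D, hDc, hDd⟩ := hdense
  have : SeparableSpace F := ⟨D, hDc, hDd⟩
  have := isCompletelyMetrizableSpace_of_noRegularGap hcc
  exact ⟨valTopology_eq hnonarch, IsCompletelyMetrizableSpace.complete, inferInstance⟩
end

section
/- Let f : ℝⁿ → ℝ be any function and let M_f be the set of local minima of f. Then the image f(M_f) is countable. -/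
/-- For any function `f : ℝⁿ → ℝ`, the image of the set of local minima of `f` is
countable. -/
theorem stmt17 (n : ℕ) (f : (Fin n → ℝ) → ℝ) :
    (f '' {x | ∃ r : ℝ, 0 < r ∧ ∀ y, dist y x < r → f x ≤ f y}).Countable := by
  obtain ⟨D, Dcount, Ddense⟩ := TopologicalSpace.exists_countable_dense (Fin n → ℝ)
  have hsub : f '' {x | ∃ r : ℝ, 0 < r ∧ ∀ y, dist y x < r → f x ≤ f y} ⊆
      ⋃ d ∈ D, ⋃ s : ℚ, {v | ∃ x, dist x d < (s : ℝ) ∧ f x = v ∧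
        ∀ y, dist y d < 2 * (s : ℝ) → f x ≤ f y} := by
    rintro v ⟨x, ⟨r, hr, hmin⟩, rfl⟩
    obtain ⟨s, hs0, hsr⟩ := exists_rat_btwn (show (0 : ℝ) < r / 3 by linarith)
    obtain ⟨d, hd, hdx⟩ := Ddense.exists_dist_lt x (show (0 : ℝ) < s from hs0)
    simp only [Set.mem_iUnion, Set.mem_setOf_eq]
    refine ⟨d, hd, s, x, ?_, rfl, ?_⟩
    · exact hdx
    · intro y hy
      apply hmin
      calc dist y x ≤ dist y d + dist d x := dist_triangle _ _ _
        _ < 2 * s + s := by rw [dist_comm d x]; exact add_lt_add hy hdx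
        _ < r := by linarith
  refine Set.Countable.mono hsub ?_
  refine Dcount.biUnion fun d _ => Set.countable_iUnion fun s => ?_
  apply Set.Subsingleton.countable
  rintro v ⟨x, hx, rfl, hxmin⟩ v' ⟨x', hx', rfl, hx'min⟩
  have h1 : f x ≤ f x' := hxmin x' (by have h0 : (0:ℝ) ≤ dist x' d := dist_nonneg; linarith)
  have h2 : f x' ≤ f x := hx'min x (by have h0 : (0:ℝ) ≤ dist x d := dist_nonneg; linarith)
  exact le_antisymm h1 h2
end
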